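/- arXiv:1207.3906 — 5 statements merged into one kernel-verified Lean document; each statement's English description precedes it below -/
import Mathlib

section
/- If (X,d) is a compact metric space and f: X → [0,1]^M is continuous, δ, ε > 0 satisfy: d(x,y) < ε implies ‖f(x) − f(y)‖_∞ < δ, and widim_ε(X,d) < M/2, then there exists a continuous ε-embedding g: X → [0,1]^M with sup_{x∈X} ‖f(x) − g(x)‖_∞ < δ. -/
open scoped ENNReal NNReal
open Set Function Filter Topology

/-- The `n`-th iterate (`n ∈ ℤ`) of a homeomorphism. -/
noncomputable def hIter {X : Type*} [TopologicalSpace X] (T : X ≃ₜ X) (n : ℤ) (x : X) : X :=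
  if 0 ≤ n then (⇑T)^[n.toNat] x else (⇑T.symm)^[(-n).toNat] x

/-- `WidimLE d ε n`: there is a finite open cover of mesh `< ε` (w.r.t. the distance
function `d`) and of order `≤ n`, i.e. every point lies in at most `n+1` members
(equivalently any `n+2` distinct members have empty intersection). -/
def WidimLE {X : Type*} [TopologicalSpace X] (d : X → X → ℝ) (ε : ℝ) (n : ℕ) : Prop :=
  ∃ (N : ℕ) (U : Fin N → Set X),
    (∀ i, IsOpen (U i)) ∧ (⋃ i, U i) = Set.univ ∧
    (∀ i, ∀ x ∈ U i, ∀ y ∈ U i, d x y < ε) ∧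
    (∀ x : X, ({i | x ∈ U i} : Set (Fin N)).ncard ≤ n + 1)

/-- `widim d ε` : the ε-width dimension with respect to the distance function `d`. -/
noncomputable def widim {X : Type*} [TopologicalSpace X] (d : X → X → ℝ) (ε : ℝ) : ℝ≥0∞ :=
  sInf {c : ℝ≥0∞ | ∃ n : ℕ, c = n ∧ WidimLE d ε n}

/-- `dynDist T n` is the dynamical distance `d_0^{n-1}(x,y) = max_{0 ≤ i < n} d(T^i x, T^i y)`. -/
noncomputable def dynDist {X : Type*} [PseudoMetricSpace X] (T : X → X) (n : ℕ) (x y : X) : ℝ :=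
  (((Finset.range n).sup fun i => nndist (T^[i] x) (T^[i] y)) : ℝ≥0)

/-- Mean dimension `mdim(X,T) = sup_{ε>0} lim_n widim_ε(X, d_0^{n-1})/n`
(the limit exists, so it coincides with the limsup used here). -/
noncomputable def mdim {X : Type*} [MetricSpace X] (T : X → X) : ℝ≥0∞ :=
  ⨆ (ε : ℝ) (_ : 0 < ε), Filter.atTop.limsup fun n : ℕ => widim (dynDist T n) ε / (n : ℝ≥0∞)

/-- The left shift on `ℤ`-indexed sequences. -/
def shift {A : Type*} (x : ℤ → A) : ℤ → A := fun n => x (n + 1)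


lemma aux_interior_empty {E : Type*} [NormedAddCommGroup E] [NormedSpace ℝ E]
    {S : AffineSubspace ℝ E} (hS : S ≠ ⊤) : interior (S : Set E) = ∅ := by
  by_contra h
  have hne : (interior (S : Set E)).Nonempty := Set.nonempty_iff_ne_empty.2 h
  have h1 : affineSpan ℝ (interior (S : Set E)) = ⊤ := isOpen_interior.affineSpan_eq_top hne
  have h2 : affineSpan ℝ (interior (S : Set E)) ≤ S :=
    (affineSpan_mono ℝ interior_subset).trans_eq S.affineSpan_coe
  rw [h1] at h2
  exact hS (top_le_iff.mp h2)

lemma aux_avoid {E : Type*} [TopologicalSpace E] {ι' : Type*} [DecidableEq ι']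
    (F : Finset ι') (C : ι' → Set E) :
    ∀ {O : Set E}, IsOpen O → O.Nonempty →
      (∀ i ∈ F, IsClosed (C i) ∧ interior (C i) = ∅) →
      ∃ x ∈ O, ∀ i ∈ F, x ∉ C i := by
  induction F using Finset.induction_on with
  | empty => exact fun hO hne _ => hne.imp fun x hx => ⟨hx, by simp⟩
  | @insert a F' ha ih =>
    intro O hO hne hC
    have hCa := hC a (Finset.mem_insert_self _ _)
    have hO' : IsOpen (O ∩ (C a)ᶜ) := hO.inter hCa.1.isOpen_compl
    have hne' : (O ∩ (C a)ᶜ).Nonempty := by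
      rw [Set.inter_compl_nonempty_iff]
      intro hsub
      have h3 : O ⊆ interior (C a) := hO.subset_interior_iff.2 hsub
      rw [hCa.2] at h3
      obtain ⟨x, hx⟩ := hne
      exact h3 hx
    obtain ⟨x, hx, hx'⟩ := ih hO' hne' (fun i hi => hC i (Finset.mem_insert_of_mem hi))
    refine ⟨x, hx.1, fun i hi => ?_⟩
    rcases Finset.mem_insert.mp hi with rfl | hi
    · exact hx.2
    · exact hx' i hi

lemma aux_gp {M : ℕ} (hM : 0 < M) (c : ℕ → Fin M → ℝ)
    (hc : ∀ i j, c i j ∈ Set.Icc (0:ℝ) 1) {η : ℝ} (hη : 0 < η) (N : ℕ) :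
    ∃ y : ℕ → Fin M → ℝ, (∀ i j, y i j ∈ Set.Icc (0:ℝ) 1) ∧ (∀ i, ‖y i - c i‖ < η) ∧
      ∀ s : Finset ℕ, s ⊆ Finset.range N → s.card ≤ M + 1 →
        ∀ w : ℕ → ℝ, ∑ i ∈ s, w i = 0 → ∑ i ∈ s, w i • y i = 0 → ∀ i ∈ s, w i = 0 := by
  classical
  induction N with
  | zero =>
    refine ⟨c, hc, fun i => by simpa using hη, fun s hs _ w _ _ i hi => absurd (hs hi) (by simp)⟩
  | succ N ih =>
    obtain ⟨y, hy1, hy2, hy3⟩ := ih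
    set θ : ℝ := min (η/4) (1/4) with hθdef
    have hθpos : 0 < θ := lt_min (by linarith) (by norm_num)
    have hθ4 : θ ≤ η/4 := min_le_left _ _
    have hθq : θ ≤ 1/4 := min_le_right _ _
    set p : Fin M → ℝ := fun j => min (max (c N j) θ) (1 - θ) with hpdef
    have hp1 : ∀ j, θ ≤ p j := fun j => le_min (le_max_right _ _) (by linarith)
    have hp2 : ∀ j, p j ≤ 1 - θ := fun j => min_le_right _ _
    have hp3 : ∀ j, |p j - c N j| ≤ θ := by
      intro j
      have hcj := hc N j
      rw [abs_sub_le_iff]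
      constructor
      · have h1 : p j ≤ max (c N j) θ := min_le_left _ _
        have h2 : max (c N j) θ ≤ c N j + θ := max_le (by linarith [hθpos]) (by linarith [hcj.1])
        linarith
      · have h1 : min (c N j) (1 - θ) ≤ p j := min_le_min (le_max_left _ _) le_rfl
        have h2 : c N j - θ ≤ min (c N j) (1 - θ) :=
          le_min (by linarith [hθpos]) (by linarith [hcj.2])
        linarith
    set F : Finset (Finset ℕ) := (Finset.range N).powerset.filter (fun t => t.card ≤ M) with hFdef
    set C : Finset ℕ → Set (Fin M → ℝ) := fun t => (affineSpan ℝ (y '' ↑t) : Set (Fin M → ℝ))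
      with hCdef
    have hC : ∀ t ∈ F, IsClosed (C t) ∧ interior (C t) = ∅ := by
      intro t ht
      rw [hFdef, Finset.mem_filter, Finset.mem_powerset] at ht
      have hne_top : affineSpan ℝ (y '' ↑t) ≠ ⊤ := by
        intro htop
        have hvtop : vectorSpan ℝ (y '' ↑t) = ⊤ := by
          have hd := direction_affineSpan ℝ (y '' ↑t)
          rw [htop, AffineSubspace.direction_top] at hd
          exact hd.symm
        have hfr : Module.finrank ℝ (vectorSpan ℝ (y '' ↑t)) < M := by
          rcases t.eq_empty_or_nonempty with rfl | htne
          · have he : (vectorSpan ℝ (y '' (↑(∅ : Finset ℕ) : Set ℕ))) = ⊥ := by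
              simp [vectorSpan_empty]
            rw [he, finrank_bot]
            exact hM
          · have hcard : t.card = (t.card - 1) + 1 :=
              (Nat.succ_pred_eq_of_pos (Finset.card_pos.2 htne)).symm
            have hle := finrank_vectorSpan_image_finset_le ℝ y t hcard
            rw [Finset.coe_image] at hle
            omega
        rw [hvtop, finrank_top, Module.finrank_fin_fun] at hfr
        omega
      exact ⟨(affineSpan ℝ (y '' ↑t)).closed_of_finiteDimensional,
        aux_interior_empty hne_top⟩
    obtain ⟨z, hzO, hz⟩ := aux_avoid F C Metric.isOpen_ball ⟨p, Metric.mem_ball_self hθpos⟩ hC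
    have hzp : ∀ j, |z j - p j| < θ := by
      intro j
      have h1 := dist_le_pi_dist z p j
      rw [Metric.mem_ball] at hzO
      rw [Real.dist_eq] at h1
      linarith
    set y' : ℕ → Fin M → ℝ := Function.update y N z with hy'def
    have hy'N : y' N = z := Function.update_self _ _ _
    have hy'ne : ∀ k, k ≠ N → y' k = y k := fun k hk => Function.update_of_ne hk _ _
    refine ⟨y', ?_, ?_, ?_⟩
    · intro i j
      by_cases hi : i = N
      · rw [hi, hy'N]
        have h3 := abs_lt.mp (hzp j)
        exact ⟨by linarith [hp1 j, h3.1], by linarith [hp2 j, h3.2]⟩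
      · rw [hy'ne i hi]; exact hy1 i j
    · intro i
      by_cases hi : i = N
      · rw [hi, hy'N]
        have hb : ‖z - c N‖ ≤ 2 * θ := by
          refine (pi_norm_le_iff_of_nonneg (by linarith)).2 fun j => ?_
          rw [Pi.sub_apply, Real.norm_eq_abs]
          have h4 : |z j - c N j| ≤ |z j - p j| + |p j - c N j| := by
            have h5 := abs_sub_le (z j) (p j) (c N j)
            simpa using h5
          linarith [hzp j, hp3 j]
        linarith
      · rw [hy'ne i hi]; exact hy2 i
    · intro s hs hscard w hw0 hwsum i hi
      by_cases hNs : N ∈ s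
      · set t := s.erase N with htdef
        have hts : t ⊆ Finset.range N := by
          intro k hk
          have hk1 := Finset.mem_of_mem_erase hk
          have hk2 := Finset.ne_of_mem_erase hk
          have h6 := hs hk1
          rw [Finset.mem_range] at h6 ⊢
          omega
        have htc : ∀ k ∈ t, y' k = y k := fun k hk => hy'ne k (Finset.ne_of_mem_erase hk)
        have hw_split : w N + ∑ k ∈ t, w k = 0 := by
          rw [htdef, Finset.add_sum_erase _ _ hNs]; exact hw0
        have hsum_split : w N • z + ∑ k ∈ t, w k • y k = 0 := by
          have h1 : ∑ k ∈ t, w k • y k = ∑ k ∈ t, w k • y' k :=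
            Finset.sum_congr rfl fun k hk => by rw [htc k hk]
          rw [h1, ← hy'N, htdef, Finset.add_sum_erase s (fun k => w k • y' k) hNs]
          exact hwsum
        by_cases hwN : w N = 0
        · have h1 : ∑ k ∈ t, w k = 0 := by rw [hwN, zero_add] at hw_split; exact hw_split
          have h2 : ∑ k ∈ t, w k • y k = 0 := by
            rw [hwN, zero_smul, zero_add] at hsum_split; exact hsum_split
          have hall := hy3 t hts
            (le_trans (Finset.card_le_card (Finset.erase_subset _ _)) hscard) w h1 h2
          by_cases hiN : i = N
          · exact hiN ▸ hwN
          · exact hall i (Finset.mem_erase.2 ⟨hiN, hi⟩)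
        · exfalso
          have htne : t.Nonempty := by
            rcases t.eq_empty_or_nonempty with h | h
            · exfalso
              rw [htdef, Finset.erase_eq_empty_iff] at h
              rcases h with h | h
              · exact absurd hNs (by simp [h])
              · rw [h, Finset.sum_singleton] at hw0
                exact hwN hw0
            · exact h
          obtain ⟨i₀, hi₀⟩ := htne
          set q : ℕ → Fin M → ℝ := fun k => if k ∈ t then y k else y i₀ with hqdef
          set w' : ℕ → ℝ := fun k => -(w k) / w N with hw'def
          have hsumt : ∑ k ∈ t, w k = -(w N) := by linarith
          have hw'sum : ∑ k ∈ t, w' k = 1 := by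
            calc ∑ k ∈ t, w' k = ∑ k ∈ t, -(w k) / w N := by rw [hw'def]
              _ = (∑ k ∈ t, -(w k)) / w N := by rw [Finset.sum_div]
              _ = w N / w N := by rw [Finset.sum_neg_distrib, hsumt, neg_neg]
              _ = 1 := div_self hwN
          have hz_comb : z = ∑ k ∈ t, w' k • y k := by
            have h1 : w N • z = ∑ k ∈ t, (-(w k)) • y k := by
              have h2 : w N • z = -(∑ k ∈ t, w k • y k) :=
                eq_neg_of_add_eq_zero_left hsum_split
              rw [h2, ← Finset.sum_neg_distrib]
              exact Finset.sum_congr rfl fun k _ => (neg_smul _ _).symm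
            calc z = (w N)⁻¹ • (w N • z) := by
                  rw [smul_smul, inv_mul_cancel₀ hwN, one_smul]
              _ = ∑ k ∈ t, w' k • y k := by
                  rw [h1, Finset.smul_sum]
                  refine Finset.sum_congr rfl fun k _ => ?_
                  rw [smul_smul, hw'def]
                  congr 1
                  field_simp
          have heq : t.affineCombination ℝ q w' = z := by
            rw [Finset.affineCombination_eq_linear_combination t q w' hw'sum, hz_comb]
            exact Finset.sum_congr rfl fun k hk => by simp [hqdef, hk]
          have hmem : z ∈ affineSpan ℝ (Set.range q) :=
            heq ▸ affineCombination_mem_affineSpan hw'sum q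
          have hrange : Set.range q ⊆ y '' ↑t := by
            rintro v ⟨k, rfl⟩
            by_cases hk : k ∈ t
            · exact ⟨k, hk, by simp [hqdef, hk]⟩
            · exact ⟨i₀, hi₀, by simp [hqdef, hk]⟩
          have hzmem : z ∈ affineSpan ℝ (y '' ↑t) := affineSpan_mono ℝ hrange hmem
          refine hz t ?_ hzmem
          rw [hFdef, Finset.mem_filter, Finset.mem_powerset]
          refine ⟨hts, ?_⟩
          rw [htdef, Finset.card_erase_of_mem hNs]
          omega
      · have hs' : s ⊆ Finset.range N := by
          intro k hk
          have h6 := hs hk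
          rw [Finset.mem_range] at h6 ⊢
          have h7 : k ≠ N := fun h => hNs (h ▸ hk)
          omega
        have h2 : ∑ k ∈ s, w k • y k = 0 := by
          rw [← hwsum]
          exact Finset.sum_congr rfl fun k hk => by rw [hy'ne k (fun h => hNs (h ▸ hk))]
        exact hy3 s hs' hscard w hw0 h2 i hi

/-- Gromov embedding lemma. -/
theorem stmt0 {X : Type*} [MetricSpace X] [CompactSpace X] {M : ℕ} (hM : 0 < M)
    (f : X → Fin M → ℝ) (hf : Continuous f) (hfc : ∀ x i, f x i ∈ Set.Icc (0:ℝ) 1)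
    {δ ε : ℝ} (hδ : 0 < δ) (hε : 0 < ε)
    (hLip : ∀ x y : X, dist x y < ε → ‖f x - f y‖ < δ)
    (hw : widim (fun x y : X => dist x y) ε < (M : ℝ≥0∞) / 2) :
    ∃ g : X → Fin M → ℝ, Continuous g ∧ (∀ x i, g x i ∈ Set.Icc (0:ℝ) 1) ∧
      (∀ x y : X, g x = g y → dist x y < ε) ∧ (∀ x, ‖f x - g x‖ < δ) := by
  classical
  rcases isEmpty_or_nonempty X with hX | hX
  · exact ⟨f, hf, hfc, fun x => (IsEmpty.false x).elim, fun x => (IsEmpty.false x).elim⟩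
  obtain ⟨m, hm, hmlt⟩ := sInf_lt_iff.mp hw
  obtain ⟨n, rfl, hwle⟩ := hm
  have h2n : 2 * n + 2 ≤ M + 1 := by
    by_contra hcon
    push_neg at hcon
    have hMle : M ≤ 2 * n := by omega
    have hle : (M : ℝ≥0∞) / 2 ≤ (n : ℝ≥0∞) := by
      have h1 : (M : ℝ≥0∞) ≤ 2 * (n : ℝ≥0∞) := by
        calc (M : ℝ≥0∞) ≤ ((2 * n : ℕ) : ℝ≥0∞) := by exact_mod_cast Nat.cast_le.2 hMle
          _ = 2 * (n : ℝ≥0∞) := by push_cast; ring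
      rw [ENNReal.div_le_iff_le_mul (Or.inl (by norm_num)) (Or.inl (by norm_num))]
      calc (M : ℝ≥0∞) ≤ 2 * (n : ℝ≥0∞) := h1
        _ = (n : ℝ≥0∞) * 2 := by ring
    exact absurd hmlt (not_lt.2 hle)
  obtain ⟨N, U, hUo, hUc, hUmesh, hUord⟩ := hwle
  obtain ⟨φ, hφ⟩ := PartitionOfUnity.exists_isSubordinate isClosed_univ U hUo
    (by rw [hUc])
  have hφsum : ∀ x : X, ∑ i : Fin N, φ i x = 1 := fun x => by
    rw [← finsum_eq_sum_of_fintype]; exact φ.sum_eq_one (Set.mem_univ x)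
  have hφsupp : ∀ (i : Fin N) (x : X), φ i x ≠ 0 → x ∈ U i := fun i x hx =>
    hφ i (subset_tsupport _ hx)
  have hptex : ∀ i : Fin N, ∃ z : X, (U i).Nonempty → z ∈ U i := by
    intro i
    rcases (U i).eq_empty_or_nonempty with h | h
    · exact ⟨Classical.arbitrary X, fun h' => absurd h (Set.nonempty_iff_ne_empty.mp h')⟩
    · exact ⟨h.choose, fun _ => h.choose_spec⟩
  choose pt hptmem using hptex
  set h : X → ℝ := fun x => ∑ i : Fin N, φ i x * ‖f x - f (pt i)‖ with hhdef
  have hcont : Continuous h := continuous_finset_sum _ fun i _ =>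
    ((φ i).continuous).mul ((hf.sub continuous_const).norm)
  have hexzero : ∀ x : X, ∃ i : Fin N, φ i x ≠ 0 := by
    intro x
    by_contra hall
    push_neg at hall
    have := hφsum x
    rw [Finset.sum_eq_zero (fun i _ => hall i)] at this
    norm_num at this
  have hkey : ∀ (x : X) (i : Fin N), φ i x ≠ 0 →
      φ i x * ‖f x - f (pt i)‖ < φ i x * δ := by
    intro x i hi
    have hxU : x ∈ U i := hφsupp i x hi
    have hptU : pt i ∈ U i := hptmem i ⟨x, hxU⟩
    have hdist : dist x (pt i) < ε := hUmesh i x hxU (pt i) hptU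
    have hpos : 0 < φ i x := lt_of_le_of_ne (φ.nonneg i x) (Ne.symm hi)
    exact mul_lt_mul_of_pos_left (hLip _ _ hdist) hpos
  have hklt : ∀ x, h x < δ := by
    intro x
    have hx1 : ∑ i : Fin N, φ i x * δ = δ := by rw [← Finset.sum_mul, hφsum, one_mul]
    obtain ⟨i₁, hi₁⟩ := hexzero x
    calc h x < ∑ i : Fin N, φ i x * δ := by
          refine Finset.sum_lt_sum (fun i _ => ?_) ⟨i₁, Finset.mem_univ _, hkey x i₁ hi₁⟩
          by_cases hi : φ i x = 0
          · simp [hi]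
          · exact (hkey x i hi).le
      _ = δ := hx1
  obtain ⟨x₀, -, hx₀⟩ := isCompact_univ.exists_isMaxOn Set.univ_nonempty hcont.continuousOn
  set η : ℝ := (δ - h x₀) / 2 with hηdef
  have hηpos : 0 < η := by
    have := hklt x₀
    rw [hηdef]; linarith
  set c : ℕ → Fin M → ℝ := fun k => if hk : k < N then f (pt ⟨k, hk⟩) else f x₀ with hcdef
  have hcc : ∀ k j, c k j ∈ Set.Icc (0:ℝ) 1 := by
    intro k j
    by_cases hk : k < N
    · rw [hcdef]; simp only [dif_pos hk]; exact hfc _ _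
    · rw [hcdef]; simp only [dif_neg hk]; exact hfc _ _
  obtain ⟨y, hy1, hy2, hy3⟩ := aux_gp hM c hcc hηpos N
  have hY : ∀ i : Fin N, ‖y (i : ℕ) - f (pt i)‖ < η := by
    intro i
    have h1 := hy2 (i : ℕ)
    rwa [show c (i : ℕ) = f (pt i) by rw [hcdef]; simp only [dif_pos i.isLt, Fin.eta]] at h1
  set g : X → Fin M → ℝ := fun x => ∑ i : Fin N, φ i x • y (i : ℕ) with hgdef
  refine ⟨g, ?_, ?_, ?_, ?_⟩
  · exact continuous_finset_sum _ fun i _ => ((φ i).continuous).smul continuous_const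
  · intro x j
    have hgx : g x j = ∑ i : Fin N, φ i x * y (i : ℕ) j := by
      rw [hgdef]; simp [Finset.sum_apply]
    constructor
    · rw [hgx]
      exact Finset.sum_nonneg fun i _ => mul_nonneg (φ.nonneg i x) (hy1 _ j).1
    · rw [hgx]
      calc ∑ i : Fin N, φ i x * y (i : ℕ) j ≤ ∑ i : Fin N, φ i x * 1 :=
            Finset.sum_le_sum fun i _ =>
              mul_le_mul_of_nonneg_left (hy1 _ j).2 (φ.nonneg i x)
        _ = 1 := by rw [← Finset.sum_mul, hφsum, one_mul]
  · intro x x' hgxy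
    set w : ℕ → ℝ := fun k => if hk : k < N then φ ⟨k, hk⟩ x - φ ⟨k, hk⟩ x' else 0 with hwdef
    have hwfin : ∀ i : Fin N, w (i : ℕ) = φ i x - φ i x' := by
      intro i
      rw [hwdef]; simp only [dif_pos i.isLt, Fin.eta]
    have hsum1 : ∑ k ∈ Finset.range N, w k = 0 := by
      rw [← Fin.sum_univ_eq_sum_range]
      rw [Finset.sum_congr rfl (fun i _ => hwfin i), Finset.sum_sub_distrib, hφsum, hφsum,
        sub_self]
    have hsum2 : ∑ k ∈ Finset.range N, w k • y k = 0 := by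
      rw [← Fin.sum_univ_eq_sum_range (fun k => w k • y k)]
      have : ∀ i : Fin N, w (i : ℕ) • y (i : ℕ) = φ i x • y (i : ℕ) - φ i x' • y (i : ℕ) := by
        intro i; rw [hwfin i, sub_smul]
      rw [Finset.sum_congr rfl (fun i _ => this i), Finset.sum_sub_distrib]
      have hg1 : (∑ i : Fin N, φ i x • y (i : ℕ)) = ∑ i : Fin N, φ i x' • y (i : ℕ) := by
        have h7 := hgxy
        simp only [hgdef] at h7
        exact h7
      rw [hg1, sub_self]
    set s : Finset ℕ := (Finset.range N).filter (fun k => w k ≠ 0) with hsdef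
    have h1 : ∑ k ∈ s, w k = 0 := by
      rw [hsdef, Finset.sum_filter_ne_zero]; exact hsum1
    have h2 : ∑ k ∈ s, w k • y k = 0 := by
      have e : ∑ k ∈ s, w k • y k = ∑ k ∈ Finset.range N, w k • y k :=
        Finset.sum_subset (Finset.filter_subset _ _) (fun k hk hks => by
          have hwk : w k = 0 := by
            by_contra hwk
            exact hks (Finset.mem_filter.2 ⟨hk, hwk⟩)
          rw [hwk, zero_smul])
      exact e.trans hsum2
    set A := Finset.univ.filter (fun i : Fin N => x ∈ U i) with hAdef
    set B := Finset.univ.filter (fun i : Fin N => x' ∈ U i) with hBdef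
    have hA : A.card ≤ n + 1 := by
      have h6 := hUord x
      have hset : {i : Fin N | x ∈ U i} = ↑A := by ext i; simp [hAdef]
      rwa [hset, Set.ncard_coe_finset] at h6
    have hB : B.card ≤ n + 1 := by
      have h6 := hUord x'
      have hset : {i : Fin N | x' ∈ U i} = ↑B := by ext i; simp [hBdef]
      rwa [hset, Set.ncard_coe_finset] at h6
    have hsub2 : s ⊆ (A ∪ B).image Fin.val := by
      intro k hk
      rw [hsdef, Finset.mem_filter, Finset.mem_range] at hk
      obtain ⟨hkN, hwk⟩ := hk
      have hne : φ ⟨k, hkN⟩ x ≠ 0 ∨ φ ⟨k, hkN⟩ x' ≠ 0 := by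
        by_contra hb
        push_neg at hb
        apply hwk
        rw [hwdef]
        simp only [dif_pos hkN]
        rw [hb.1, hb.2, sub_self]
      refine Finset.mem_image.2 ⟨⟨k, hkN⟩, ?_, rfl⟩
      rcases hne with hne | hne
      · exact Finset.mem_union_left _ (Finset.mem_filter.2 ⟨Finset.mem_univ _, hφsupp _ _ hne⟩)
      · exact Finset.mem_union_right _ (Finset.mem_filter.2 ⟨Finset.mem_univ _, hφsupp _ _ hne⟩)
    have hcard : s.card ≤ M + 1 := by
      have hc1 : s.card ≤ ((A ∪ B).image Fin.val).card := Finset.card_le_card hsub2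
      have hc2 : ((A ∪ B).image Fin.val).card ≤ (A ∪ B).card := Finset.card_image_le
      have hc3 : (A ∪ B).card ≤ A.card + B.card := Finset.card_union_le _ _
      omega
    have hzero := hy3 s (Finset.filter_subset _ _) hcard w h1 h2
    have hallw : ∀ i : Fin N, φ i x = φ i x' := by
      intro i
      have hw0 : w (i : ℕ) = 0 := by
        by_cases hks : (i : ℕ) ∈ s
        · exact hzero _ hks
        · by_contra hwk
          exact hks (Finset.mem_filter.2 ⟨Finset.mem_range.2 i.isLt, hwk⟩)
      rw [hwfin i] at hw0
      linarith
    obtain ⟨i₁, hi₁⟩ := hexzero x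
    have hi₁' : φ i₁ x' ≠ 0 := by rw [← hallw i₁]; exact hi₁
    exact hUmesh i₁ x (hφsupp _ _ hi₁) x' (hφsupp _ _ hi₁')
  · intro x
    have hfx : f x - g x = ∑ i : Fin N, φ i x • (f x - y (i : ℕ)) := by
      rw [hgdef]
      simp only [smul_sub, Finset.sum_sub_distrib]
      congr 1
      rw [← Finset.sum_smul, hφsum, one_smul]
    calc ‖f x - g x‖ = ‖∑ i : Fin N, φ i x • (f x - y (i : ℕ))‖ := by rw [hfx]
      _ ≤ ∑ i : Fin N, ‖φ i x • (f x - y (i : ℕ))‖ := norm_sum_le _ _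
      _ = ∑ i : Fin N, φ i x * ‖f x - y (i : ℕ)‖ := by
          refine Finset.sum_congr rfl fun i _ => ?_
          rw [norm_smul, Real.norm_eq_abs, abs_of_nonneg (φ.nonneg i x)]
      _ ≤ ∑ i : Fin N, φ i x * (‖f x - f (pt i)‖ + η) := by
          refine Finset.sum_le_sum fun i _ => ?_
          refine mul_le_mul_of_nonneg_left ?_ (φ.nonneg i x)
          calc ‖f x - y (i : ℕ)‖ ≤ ‖f x - f (pt i)‖ + ‖f (pt i) - y (i : ℕ)‖ := by
                have := norm_add_le (f x - f (pt i)) (f (pt i) - y (i : ℕ))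
                rwa [sub_add_sub_cancel] at this
            _ ≤ ‖f x - f (pt i)‖ + η := by
                have h5 := hY i
                rw [← norm_neg, neg_sub] at h5
                linarith
      _ = h x + η := by
          rw [hhdef]
          simp only [mul_add, Finset.sum_add_distrib]
          rw [← Finset.sum_mul, hφsum, one_mul]
      _ ≤ h x₀ + η := by
          have h8 : h x ≤ h x₀ := isMaxOn_iff.mp hx₀ x (Set.mem_univ x)
          linarith
      _ < δ := by rw [hηdef]; linarith [hklt x₀]
end

section
/- Let (X,d) be a compact metric space and ε > 0. Then widim_ε(X,d) equals the minimum n ≥ 0 such that there exists a finite open cover {U_1,…,U_N} of X with diam(U_i) < ε for all i and such that any n+2 distinct members of the cover have empty intersection. -/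
open scoped ENNReal NNReal
open Set Function Filter Topology

/-- `PolyWidimLE d ε n`: there is a finite simplicial complex (polyhedron) of dimension
`≤ n` (all faces have at most `n+1` vertices) inside some `ℝ^m` and a continuous
`ε`-embedding of `X` into its underlying space. -/
def PolyWidimLE {X : Type*} [TopologicalSpace X] (d : X → X → ℝ) (ε : ℝ) (n : ℕ) : Prop :=
  ∃ (m : ℕ) (P : Geometry.SimplicialComplex ℝ (Fin m → ℝ)) (f : X → Fin m → ℝ),
    P.faces.Finite ∧ (∀ s ∈ P.faces, s.card ≤ n + 1) ∧
    Continuous f ∧ (∀ x, f x ∈ P.space) ∧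
    (∀ x y : X, f x = f y → d x y < ε)

/-!
A cover of mesh `< ε` and order `≤ n` gives, through a subordinate partition of unity, an
`ε`-embedding into the `n`-skeleton of a standard simplex, which is a polyhedron of dimension `n`.

Conversely, barycentric coordinates turn an `ε`-embedding into an `n`-dimensional polyhedron into a
continuous map `φ` to the `n`-skeleton of a standard simplex with the same fibres, and by
compactness points with `δ`-close images are `ε`-close. After rescaling so that the coordinates sum
to a half-integer, cover the skeleton by the cubes of the `n + 1` grids `(n + 2) ℤ + i + 1`, shrunk
by a margin `μ`. Cubes of one grid are disjoint, so the order is `≤ n`. If a point were within `μ`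
of every grid, the `n + 1` offending coordinates would be distinct and nonzero, hence all its
nonzero coordinates, and their sum would lie within `(n + 1) μ < 1 / 2` of an integer.
-/

open Finset

theorem widimLE_of_cover {X : Type*} [TopologicalSpace X] {d : X → X → ℝ} {ε : ℝ} {n : ℕ}
    {ι : Type*} [Finite ι] (U : ι → Set X) (hUo : ∀ i, IsOpen (U i)) (hUc : ⋃ i, U i = univ)
    (hUd : ∀ i, ∀ x ∈ U i, ∀ y ∈ U i, d x y < ε) (hord : ∀ x, {i | x ∈ U i}.ncard ≤ n + 1) :
    WidimLE d ε n := by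
  obtain ⟨N, ⟨e⟩⟩ := Finite.exists_equiv_fin ι
  refine ⟨N, U ∘ e.symm, fun j => hUo _, e.symm.surjective.iUnion_comp U ▸ hUc,
    fun j => hUd _, fun x => ?_⟩
  have : {j | x ∈ (U ∘ e.symm) j} = e '' {i | x ∈ U i} := by
    ext j
    simp
  rw [this, Set.ncard_image_of_injective _ e.injective]
  exact hord x

def stdSkeleton (V : Type*) [Fintype V] (n : ℕ) : Set (V → ℝ) :=
  {p | p ∈ stdSimplex ℝ V ∧ #{v | p v ≠ 0} ≤ n + 1}

theorem exists_continuous_stdSkeleton_of_widimLE {X : Type*} [TopologicalSpace X] [NormalSpace X]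
    {d : X → X → ℝ} {ε : ℝ} {n : ℕ} (h : WidimLE d ε n) :
    ∃ (N : ℕ) (φ : X → Fin N → ℝ), Continuous φ ∧ (∀ x, φ x ∈ stdSkeleton (Fin N) n) ∧
      ∀ x y, φ x = φ y → d x y < ε := by
  obtain ⟨N, U, hUo, hUc, hUd, hUord⟩ := h
  obtain ⟨ρ, hρ⟩ := PartitionOfUnity.exists_isSubordinate_of_locallyFinite isClosed_univ U hUo
    (locallyFinite_of_finite U) hUc.ge
  have hsum : ∀ x, ∑ i, ρ i x = 1 := fun x => by
    rw [← finsum_eq_sum_of_fintype]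
    exact ρ.sum_eq_one (mem_univ x)
  have hmem : ∀ i x, ρ i x ≠ 0 → x ∈ U i := fun i x hx => hρ i (subset_tsupport _ hx)
  refine ⟨N, fun x i => ρ i x, continuous_pi fun i => (ρ i).continuous,
    fun x => ⟨⟨fun i => ρ.nonneg i x, hsum x⟩, ?_⟩, fun x y hxy => ?_⟩
  · calc #{i | ρ i x ≠ 0} = (↑({i | ρ i x ≠ 0} : Finset (Fin N)) : Set (Fin N)).ncard :=
          (Set.ncard_coe_finset _).symm
      _ ≤ {i | x ∈ U i}.ncard :=
          Set.ncard_le_ncard (fun i hi => hmem i x (by simpa using hi)) (Set.toFinite _)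
      _ ≤ n + 1 := hUord x
  · obtain ⟨i, hi⟩ : ∃ i, ρ i x ≠ 0 := by
      by_contra! h
      simpa [h] using hsum x
    exact hUd i x (hmem i x hi) y (hmem i y (by rwa [← show ρ i x = ρ i y from congrFun hxy i]))

open Classical in
noncomputable def stdSkeletonComplex (V : Type*) [DecidableEq V] (n : ℕ) :
    Geometry.SimplicialComplex ℝ (V → ℝ) :=
  Geometry.SimplicialComplex.ofAffineIndependent
    { faces :=
        {t | t.Nonempty ∧ #t ≤ n + 1 ∧ (t : Set (V → ℝ)) ⊆ Set.range fun v => Pi.single v (1 : ℝ)}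
      isRelLowerSet_faces := fun _ ht => ⟨ht.1, fun _ hst hs =>
        ⟨hs, (Finset.card_le_card hst).trans ht.2.1, (coe_subset.2 hst).trans ht.2.2⟩⟩ }
    ((Pi.linearIndependent_single_one V ℝ).affineIndependent.range.mono
      (iUnion₂_subset fun t (ht : t.Nonempty ∧ #t ≤ n + 1 ∧ (t : Set (V → ℝ)) ⊆ _) => ht.2.2))

section StdSkeletonComplex

variable {V : Type*} [DecidableEq V] {n : ℕ}

lemma mem_stdSkeletonComplex_faces {t : Finset (V → ℝ)} :
    t ∈ (stdSkeletonComplex V n).faces ↔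
      t.Nonempty ∧ #t ≤ n + 1 ∧ (t : Set (V → ℝ)) ⊆ Set.range fun v => Pi.single v (1 : ℝ) :=
  Iff.rfl

lemma finite_stdSkeletonComplex_faces [Fintype V] :
    (stdSkeletonComplex V n).faces.Finite := by
  refine (Finset.univ.image fun v => Pi.single v (1 : ℝ)).powerset.finite_toSet.subset
    fun t ht => mem_coe.2 (Finset.mem_powerset.2 fun p hp => ?_)
  obtain ⟨v, rfl⟩ := (mem_stdSkeletonComplex_faces.1 ht).2.2 hp
  exact mem_image_of_mem _ (mem_univ v)

lemma stdSkeleton_subset_space [Fintype V] :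
    stdSkeleton V n ⊆ (stdSkeletonComplex V n).space := by
  rintro p ⟨⟨hnn, hsum⟩, hsupp⟩
  set S : Finset V := {v | p v ≠ 0}
  have hS : ∑ v ∈ S, p v = 1 := by rw [sum_filter_ne_zero, hsum]
  refine Geometry.SimplicialComplex.mem_space_iff.2 ⟨S.image fun v => Pi.single v 1, ?_, ?_⟩
  · refine mem_stdSkeletonComplex_faces.2 ⟨?_, card_image_le.trans hsupp, ?_⟩
    · exact (nonempty_of_sum_ne_zero (hS.trans_ne one_ne_zero)).image _
    · simp [Set.subset_def]
  · have hp : ∑ v ∈ S, p v • Pi.single v (1 : ℝ) = p := by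
      rw [sum_filter_of_ne fun v _ hv => left_ne_zero_of_smul hv, ← pi_eq_sum_univ']
    rw [← hp]
    exact (convex_convexHull ℝ _).sum_mem (fun v _ => hnn v) hS fun v hv =>
      subset_convexHull ℝ _ (mem_image_of_mem _ hv)

end StdSkeletonComplex

theorem polyWidimLE_of_continuous_stdSkeleton {X : Type*} [TopologicalSpace X]
    {d : X → X → ℝ} {ε : ℝ} {n N : ℕ} {φ : X → Fin N → ℝ} (hφ : Continuous φ)
    (hφV : ∀ x, φ x ∈ stdSkeleton (Fin N) n) (hfib : ∀ x y, φ x = φ y → d x y < ε) :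
    PolyWidimLE d ε n :=
  ⟨N, stdSkeletonComplex (Fin N) n, φ, finite_stdSkeletonComplex_faces,
    fun _ ht => (mem_stdSkeletonComplex_faces.1 ht).2.1, hφ,
    fun x => stdSkeleton_subset_space (hφV x), hfib⟩

theorem Geometry.SimplicialComplex.apply_eq_apply_of_mem_convexHull {E : Type*}
    [AddCommGroup E] [Module ℝ E] [DecidableEq E] (K : SimplicialComplex ℝ E) {s t : Finset E}
    (hs : s ∈ K.faces) (ht : t ∈ K.faces) {c₁ c₂ : E → E → ℝ}
    (hc₁ : ∀ w : E → ℝ, ∑ y ∈ s, w y = 1 → ∀ v, c₁ v (∑ y ∈ s, w y • y) = if v ∈ s then w v else 0)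
    (hc₂ : ∀ w : E → ℝ, ∑ y ∈ t, w y = 1 → ∀ v, c₂ v (∑ y ∈ t, w y • y) = if v ∈ t then w v else 0)
    {p : E} (hps : p ∈ convexHull ℝ ↑s) (hpt : p ∈ convexHull ℝ ↑t) (v : E) :
    c₁ v p = c₂ v p := by
  have hp : p ∈ convexHull ℝ ↑(s ∩ t) := by
    rw [coe_inter]
    exact K.inter_subset_convexHull hs ht ⟨hps, hpt⟩
  obtain ⟨w, -, hw1, rfl⟩ := mem_convexHull'.1 hp
  have key : ∀ {u : Finset E} {c : E → E → ℝ}, s ∩ t ⊆ u →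
      (∀ w : E → ℝ, ∑ y ∈ u, w y = 1 → ∀ v, c v (∑ y ∈ u, w y • y) = if v ∈ u then w v else 0) →
      c v (∑ y ∈ s ∩ t, w y • y) = if v ∈ s ∩ t then w v else 0 := by
    intro u c hsub hc
    have hw' := hc (fun y => if y ∈ s ∩ t then w y else 0)
    simp only [ite_smul, zero_smul, sum_ite_mem, Finset.inter_eq_right.2 hsub] at hw'
    rw [hw' hw1 v]
    by_cases h : v ∈ s ∩ t
    · rw [if_pos (hsub h)]
    · simp [h]
  rw [key inter_subset_left hc₁, key inter_subset_right hc₂]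

section Barycentric

variable {E : Type*} [NormedAddCommGroup E] [NormedSpace ℝ E] [FiniteDimensional ℝ E]

theorem AffineIndependent.exists_continuous_coord [DecidableEq E] {s : Finset E}
    (hs : AffineIndependent ℝ ((↑) : s → E)) :
    ∃ c : E → E → ℝ, (∀ v, Continuous (c v)) ∧ ∀ w : E → ℝ, ∑ y ∈ s, w y = 1 →
      ∀ v, c v (∑ y ∈ s, w y • y) = if v ∈ s then w v else 0 := by
  obtain ⟨t, hst, ht, hspan⟩ := exists_subset_affineIndependent_affineSpan_eq_top hs
  let b : AffineBasis t ℝ E := ⟨(↑), ht, by rw [Subtype.range_coe]; exact hspan⟩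
  refine ⟨fun v p => if hv : v ∈ s then b.coord ⟨v, hst hv⟩ p else 0, fun v => ?_,
    fun w hw v => ?_⟩
  · dsimp only
    split_ifs
    exacts [(b.coord _).continuous_of_finiteDimensional, continuous_const]
  · dsimp only
    split_ifs with hv
    · have hcomb : ∑ y ∈ s, w y • y = s.affineCombination ℝ id w :=
        (s.affineCombination_eq_linear_combination id w hw).symm
      rw [hcomb, s.map_affineCombination _ w hw, s.affineCombination_eq_linear_combination _ w hw]
      have hcoord : ∀ y ∈ s, b.coord ⟨v, hst hv⟩ y = if v = y then 1 else 0 := fun y hy =>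
        (b.coord_apply ⟨v, hst hv⟩ ⟨y, hst hy⟩).trans (by simp)
      simp only [Function.comp_apply, id, smul_eq_mul]
      rw [sum_congr rfl fun y hy => by rw [hcoord y hy]]
      simp [hv]
    · rfl

theorem Geometry.SimplicialComplex.exists_barycentricCoord (K : SimplicialComplex ℝ E)
    (hK : K.faces.Finite) :
    ∃ β : E → E → ℝ, (∀ v, ContinuousOn (β v) K.space) ∧ ∀ p ∈ K.space, ∃ s ∈ K.faces,
      (∀ v, 0 ≤ β v p) ∧ (∀ v ∉ s, β v p = 0) ∧ ∑ v ∈ s, β v p = 1 ∧ ∑ v ∈ s, β v p • v = p := by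
  classical
  choose c hc_cont hc using fun s (hs : s ∈ K.faces) => (K.indep hs).exists_continuous_coord
  let β : E → E → ℝ := fun v p =>
    if h : ∃ s, ∃ hs : s ∈ K.faces, p ∈ convexHull ℝ ↑s then c _ h.choose_spec.choose v p else 0
  have hβ : ∀ s (hs : s ∈ K.faces) p, p ∈ convexHull ℝ ↑s → ∀ v, β v p = c s hs v p :=
    fun s hs p hp v => by
      have h : ∃ s, ∃ hs : s ∈ K.faces, p ∈ convexHull ℝ ↑s := ⟨s, hs, hp⟩
      simp only [β, dif_pos h]
      exact K.apply_eq_apply_of_mem_convexHull h.choose_spec.choose hs (hc _ _) (hc s hs)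
        h.choose_spec.choose_spec hp v
  refine ⟨β, fun v => ?_, fun p hp => ?_⟩
  · have : Finite K.faces := hK.to_subtype
    rw [Geometry.SimplicialComplex.space, biUnion_eq_iUnion]
    refine (locallyFinite_of_finite _).continuousOn_iUnion
      (fun s => (s.1.finite_toSet.isCompact_convexHull ℝ).isClosed) fun s => ?_
    exact (hc_cont s.1 s.2 v).continuousOn.congr fun p hp => hβ s.1 s.2 p hp v
  · obtain ⟨s, hs, hps⟩ := Geometry.SimplicialComplex.mem_space_iff.1 hp
    obtain ⟨w, hw0, hw1, hwp⟩ := mem_convexHull'.1 hps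
    have hβw : ∀ v, β v p = if v ∈ s then w v else 0 := fun v => by
      rw [hβ s hs p hps, ← hwp, hc s hs w hw1]
    refine ⟨s, hs, fun v => ?_, fun v hv => by rw [hβw, if_neg hv], ?_, ?_⟩
    · rw [hβw]
      split_ifs with h
      exacts [hw0 v h, le_rfl]
    · rw [← hw1]
      exact sum_congr rfl fun v hv => by rw [hβw, if_pos hv]
    · conv_rhs => rw [← hwp]
      exact sum_congr rfl fun v hv => by rw [hβw, if_pos hv]

end Barycentric

theorem exists_continuous_stdSkeleton_of_polyWidimLE {X : Type*} [TopologicalSpace X]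
    {d : X → X → ℝ} {ε : ℝ} {n : ℕ} (h : PolyWidimLE d ε n) :
    ∃ (V : Type) (_ : Fintype V) (φ : X → V → ℝ), Continuous φ ∧
      (∀ x, φ x ∈ stdSkeleton V n) ∧ ∀ x y, φ x = φ y → d x y < ε := by
  classical
  obtain ⟨m, P, f, hPfin, hPcard, hf, hfP, hfib⟩ := h
  obtain ⟨β, hβ_cont, hβ⟩ := P.exists_barycentricCoord hPfin
  set T : Finset (Fin m → ℝ) := hPfin.toFinset.biUnion id
  have hT : ∀ s ∈ P.faces, s ⊆ T := fun s hs => subset_biUnion_of_mem id (hPfin.mem_toFinset.2 hs)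
  have key : ∀ x, (fun v : T => β v (f x)) ∈ stdSkeleton T n ∧
      ∑ v : T, β v (f x) • (v : Fin m → ℝ) = f x := by
    intro x
    obtain ⟨s, hs, hnn, hzero, hsum, hrec⟩ := hβ (f x) (hfP x)
    have hsum_T : ∀ {M : Type} [AddCommMonoid M] (g : (Fin m → ℝ) → M), (∀ v ∉ s, g v = 0) →
        ∑ v : T, g v = ∑ v ∈ s, g v := fun g hg =>
      (sum_coe_sort T g).trans (sum_subset (hT s hs) fun v _ hv => hg v hv).symm
    refine ⟨⟨⟨fun v => hnn v, ?_⟩, ?_⟩, ?_⟩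
    · rwa [hsum_T _ hzero]
    · refine (card_le_card_of_injOn Subtype.val (fun v hv => ?_) Subtype.val_injective.injOn).trans
        (hPcard s hs)
      by_contra hvs
      exact (mem_filter.1 hv).2 (hzero v hvs)
    · rwa [hsum_T (fun v => β v (f x) • v) fun v hv => by rw [hzero v hv, zero_smul]]
  refine ⟨T, inferInstance, fun x v => β v (f x),
    continuous_pi fun v => (hβ_cont v).comp_continuous hf hfP, fun x => (key x).1,
    fun x y hxy => hfib x y ?_⟩
  rw [← (key x).2, ← (key y).2]
  exact sum_congr rfl fun v _ => by rw [show β v (f x) = β v (f y) from congrFun hxy v]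

theorem Continuous.exists_pos_forall_dist_lt {X Y : Type*} [PseudoMetricSpace X] [CompactSpace X]
    [MetricSpace Y] {g : X → Y} (hg : Continuous g) {ε : ℝ}
    (h : ∀ x y, g x = g y → dist x y < ε) :
    ∃ δ > 0, ∀ x y, dist (g x) (g y) < δ → dist x y < ε := by
  let C : Set (X × X) := {q | ε ≤ dist q.1 q.2}
  have hC : IsCompact C := (isClosed_le continuous_const continuous_dist).isCompact
  obtain ⟨δ, hδ, hδC⟩ := hC.exists_forall_le'
    ((hg.comp continuous_fst).dist (hg.comp continuous_snd)).continuousOn (a := 0)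
    fun q hq => dist_pos.2 fun hq' => (h q.1 q.2 hq').not_ge hq
  exact ⟨δ, hδ, fun x y hxy => not_le.1 fun hxy' => (hδC (x, y) hxy').not_gt hxy⟩

lemma half_le_abs_intCast_add_half (z : ℤ) : (1 / 2 : ℝ) ≤ |(z : ℝ) + 1 / 2| := by
  rcases le_or_gt 0 z with hz | hz
  · rw [abs_of_nonneg (by positivity)]
    linarith [(by exact_mod_cast hz : (0 : ℝ) ≤ z)]
  · have : (z : ℝ) ≤ -1 := by exact_mod_cast Int.le_sub_one_of_lt hz
    rw [abs_of_neg (by linarith)]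
    linarith

lemma Finset.sum_comp_eq_sum_of_injective {V M : Type*} [Fintype V] [AddCommMonoid M]
    [DecidableEq M] {m : ℕ} (u : V → M) {v : Fin m → V} (hv : Function.Injective v)
    (hnz : ∀ i, u (v i) ≠ 0) (hsupp : #{w | u w ≠ 0} ≤ m) : ∑ i, u (v i) = ∑ w, u w := by
  classical
  have hsub : univ.image v ⊆ ({w | u w ≠ 0} : Finset V) := by
    simpa [Finset.subset_iff] using hnz
  have himage := eq_of_subset_of_card_le hsub (by rwa [card_image_of_injective _ hv, card_fin])
  rw [← sum_image hv.injOn, himage, sum_filter_ne_zero]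

def gridPt (n : ℕ) (i : Fin (n + 1)) (b : ℤ) : ℤ := (n + 2) * b + (i + 1)

section Grid

variable {n : ℕ}

lemma gridPt_emod (i : Fin (n + 1)) (b : ℤ) : gridPt n i b % (n + 2) = i + 1 := by
  rw [gridPt, add_comm, Int.add_mul_emod_self_left]
  exact Int.emod_eq_of_lt (by positivity) (by omega)

lemma gridPt_ne_zero (i : Fin (n + 1)) (b : ℤ) : gridPt n i b ≠ 0 := fun h => by
  have := gridPt_emod i b
  rw [h, Int.zero_emod] at this
  omega

lemma eq_of_gridPt_eq {i j : Fin (n + 1)} {b c : ℤ} (h : gridPt n i b = gridPt n j c) : i = j := by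
  have := gridPt_emod i b
  rw [h, gridPt_emod] at this
  omega

lemma gridPt_mono (i : Fin (n + 1)) : Monotone (gridPt n i) := fun b c h => by
  have : (0 : ℤ) ≤ n + 2 := by positivity
  unfold gridPt
  nlinarith

lemma gridPt_add_one (i : Fin (n + 1)) (b : ℤ) : gridPt n i (b + 1) = gridPt n i b + (n + 2) := by
  unfold gridPt
  ring

theorem exists_forall_lt_abs_sub_gridPt {V : Type*} [Fintype V] (u : V → ℝ)
    (hsupp : #{v | u v ≠ 0} ≤ n + 1) (K : ℤ) (hsum : ∑ v, u v = K + 1 / 2) {μ : ℝ}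
    (hμ : (n + 1) * μ < 1 / 2) : ∃ i : Fin (n + 1), ∀ v b, μ < |u v - gridPt n i b| := by
  by_contra! hbad
  choose v b hvb using hbad
  have hμ0 : 0 ≤ μ := (abs_nonneg _).trans (hvb 0)
  have hμ1 : μ < 1 / 2 := by nlinarith [(Nat.cast_nonneg n : (0 : ℝ) ≤ n)]
  have close : ∀ (t : ℝ) (k l : ℤ), |t - k| ≤ μ → |t - l| ≤ μ → k = l := by
    intro t k l hk hl
    have : |((k - l : ℤ) : ℝ)| < 1 := by
      rw [Int.cast_sub]
      calc |(k : ℝ) - l| = |(t - l) - (t - k)| := by ring_nf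
        _ ≤ |t - l| + |t - k| := abs_sub _ _
        _ < 1 := by linarith
    rw [← Int.cast_abs, ← Int.cast_one, Int.cast_lt, Int.abs_lt_one_iff, sub_eq_zero] at this
    exact this
  have hnz : ∀ i, u (v i) ≠ 0 := fun i h =>
    gridPt_ne_zero i (b i) (close 0 _ 0 (h ▸ hvb i) (by simpa using hμ0))
  have hinj : Function.Injective v := fun i j h =>
    eq_of_gridPt_eq (close (u (v i)) _ _ (hvb i) (h ▸ hvb j))
  have hsum' := (sum_comp_eq_sum_of_injective u hinj hnz hsupp).trans hsum
  have := half_le_abs_intCast_add_half (K - ∑ i, gridPt n i (b i))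
  have : |((K - ∑ i, gridPt n i (b i) : ℤ) : ℝ) + 1 / 2| ≤ (n + 1) * μ :=
    calc _ = |∑ i, (u (v i) - gridPt n i (b i))| := by
          rw [sum_sub_distrib, hsum']
          push_cast
          ring_nf
      _ ≤ ∑ i, |u (v i) - gridPt n i (b i)| := abs_sum_le_sum_abs _ _
      _ ≤ ∑ _i : Fin (n + 1), μ := sum_le_sum fun i _ => hvb i
      _ = (n + 1) * μ := by simp
  linarith

def gridCell (n : ℕ) (μ : ℝ) (i : Fin (n + 1)) (b : ℤ) : Set ℝ :=
  Ioo (gridPt n i b + μ) (gridPt n i (b + 1) - μ)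

variable {μ t : ℝ} {i : Fin (n + 1)}

lemma mem_gridCell_floor (ht : ∀ b, μ < |t - gridPt n i b|) :
    t ∈ gridCell n μ i ⌊(t - (i + 1)) / (n + 2)⌋ := by
  set b := ⌊(t - (i + 1)) / (n + 2)⌋
  have hn : (0 : ℝ) < n + 2 := by positivity
  have hlo : (gridPt n i b : ℝ) ≤ t := by
    have := (le_div_iff₀ hn).1 (Int.floor_le ((t - (i + 1)) / (n + 2)))
    push_cast [gridPt]
    linarith
  have hhi : t < gridPt n i (b + 1) := by
    have := (div_lt_iff₀ hn).1 (Int.lt_floor_add_one ((t - (i + 1)) / (n + 2)))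
    push_cast [gridPt]
    linarith
  have h1 := ht b
  have h2 := ht (b + 1)
  rw [abs_of_nonneg (by linarith)] at h1
  rw [abs_of_neg (by linarith)] at h2
  constructor <;> linarith

lemma gridCell_eq_of_mem {b c : ℤ} (hb : t ∈ gridCell n μ i b)
    (hc : t ∈ gridCell n μ i c) (hμ : 0 ≤ μ) : b = c := by
  have key : ∀ b c, t ∈ gridCell n μ i b → t ∈ gridCell n μ i c → b ≤ c := by
    intro b c hb hc
    by_contra! hlt
    have : (gridPt n i (c + 1) : ℝ) ≤ gridPt n i b := by exact_mod_cast gridPt_mono i hlt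
    linarith [hb.1, hc.2]
  exact le_antisymm (key b c hb hc) (key c b hc hb)

lemma abs_sub_lt_of_mem_gridCell {s : ℝ} {b : ℤ} (hs : s ∈ gridCell n μ i b)
    (ht : t ∈ gridCell n μ i b) (hμ : 0 ≤ μ) : |s - t| < n + 2 := by
  have : (gridPt n i (b + 1) : ℝ) = gridPt n i b + (n + 2) := by
    rw [gridPt_add_one]; push_cast; ring
  rw [abs_sub_lt_iff]
  constructor <;> linarith [hs.1, hs.2, ht.1, ht.2]

lemma mem_Icc_of_mem_gridCell {b : ℤ} {K : ℕ} (ht : t ∈ gridCell n μ i b) (hμ : 0 ≤ μ)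
    (h0 : 0 ≤ t) (hK : t < K + 1) : b ∈ Set.Icc (-1 : ℤ) K := by
  have hlo : gridPt n i b < (K : ℤ) + 1 := by
    have : (gridPt n i b : ℝ) < K + 1 := by linarith [ht.1]
    exact_mod_cast this
  have hhi : 0 < gridPt n i (b + 1) := by
    have : (0 : ℝ) < gridPt n i (b + 1) := by linarith [ht.2]
    exact_mod_cast this
  simp only [gridPt] at hlo hhi
  have := i.isLt
  constructor <;> nlinarith

end Grid

theorem exists_mem_gridCell_of_mem_stdSkeleton {V : Type*} [Fintype V] {n : ℕ} {p : V → ℝ}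
    (hp : p ∈ stdSkeleton V n) (K : ℕ) :
    ∃ (i : Fin (n + 1)) (β : V → Set.Icc (-1 : ℤ) K),
      ∀ v, (K + 1 / 2) * p v ∈ gridCell n (1 / (2 * (n + 2))) i (β v) := by
  obtain ⟨⟨hnn, hsum⟩, hsupp⟩ := hp
  have hμ : (n + 1) * (1 / (2 * (n + 2)) : ℝ) < 1 / 2 := by
    rw [mul_one_div, div_lt_div_iff₀ (by positivity) two_pos]
    linarith
  have hscale : (0 : ℝ) < K + 1 / 2 := by positivity
  have hsupp' : #{v | (K + 1 / 2) * p v ≠ 0} ≤ n + 1 := by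
    simpa only [ne_eq, mul_eq_zero, not_or, hscale.ne', not_false_eq_true, true_and] using hsupp
  obtain ⟨i, hi⟩ := exists_forall_lt_abs_sub_gridPt _ hsupp' K (by simp [← mul_sum, hsum]) hμ
  have hcell := fun v => mem_gridCell_floor (hi v)
  have hle : ∀ v, (K + 1 / 2) * p v < K + 1 := fun v => by
    have : p v ≤ 1 := hsum ▸ single_le_sum (fun w _ => hnn w) (mem_univ v)
    nlinarith
  exact ⟨i, fun v => ⟨_, mem_Icc_of_mem_gridCell (hcell v) (by positivity)
    (mul_nonneg hscale.le (hnn v)) (hle v)⟩, hcell⟩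

theorem widimLE_of_continuous_stdSkeleton {X : Type*} [TopologicalSpace X] {d : X → X → ℝ}
    {ε : ℝ} {n : ℕ} {V : Type*} [Fintype V] {φ : X → V → ℝ} (hφ : Continuous φ)
    (hφV : ∀ x, φ x ∈ stdSkeleton V n) {δ : ℝ} (hδ : 0 < δ)
    (hleb : ∀ x y, dist (φ x) (φ y) < δ → d x y < ε) : WidimLE d ε n := by
  obtain ⟨K, hK⟩ := exists_nat_gt ((n + 2) / δ)
  have hμ : (0 : ℝ) ≤ 1 / (2 * (n + 2)) := by positivity
  have hscale : (0 : ℝ) < K + 1 / 2 := by positivity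
  let cube : Fin (n + 1) × (V → Set.Icc (-1 : ℤ) K) → Set X :=
    fun p => ⋂ v, (fun x => (K + 1 / 2) * φ x v) ⁻¹' gridCell n (1 / (2 * (n + 2))) p.1 (p.2 v)
  refine widimLE_of_cover cube (fun p => ?_) ?_ (fun p x hx y hy => ?_) (fun x => ?_)
  · exact isOpen_iInter_of_finite fun v =>
      isOpen_Ioo.preimage (continuous_const.mul ((continuous_apply v).comp hφ))
  · refine eq_univ_of_forall fun x => mem_iUnion.2 ?_
    obtain ⟨i, β, hβ⟩ := exists_mem_gridCell_of_mem_stdSkeleton (hφV x) K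
    exact ⟨(i, β), mem_iInter.2 hβ⟩
  · refine hleb x y ((dist_pi_lt_iff hδ).2 fun v => ?_)
    have hcell := abs_sub_lt_of_mem_gridCell (mem_iInter.1 hx v) (mem_iInter.1 hy v) hμ
    have hKδ : (n + 2 : ℝ) < K * δ := (div_lt_iff₀ hδ).1 hK
    rw [Real.dist_eq]
    simp only [← mul_sub, abs_mul, abs_of_pos hscale] at hcell
    nlinarith [abs_nonneg (φ x v - φ y v)]
  · have hinj : Set.InjOn Prod.fst {p | x ∈ cube p} := by
      rintro ⟨i, β⟩ hβ ⟨j, γ⟩ hγ (rfl : i = j)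
      congr 1
      funext v
      exact Subtype.ext (gridCell_eq_of_mem (mem_iInter.1 hβ v) (mem_iInter.1 hγ v) hμ)
    calc {p | x ∈ cube p}.ncard ≤ (univ : Set (Fin (n + 1))).ncard :=
          Set.ncard_le_ncard_of_injOn Prod.fst (fun _ _ => mem_univ _) hinj
      _ = n + 1 := by simp

theorem widimLE_of_polyWidimLE {X : Type*} [PseudoMetricSpace X] [CompactSpace X] {ε : ℝ}
    {n : ℕ} (h : PolyWidimLE (fun x y : X => dist x y) ε n) :
    WidimLE (fun x y : X => dist x y) ε n := by
  obtain ⟨V, _, φ, hφ, hφV, hfib⟩ := exists_continuous_stdSkeleton_of_polyWidimLE h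
  obtain ⟨δ, hδ, hleb⟩ := hφ.exists_pos_forall_dist_lt hfib
  exact widimLE_of_continuous_stdSkeleton hφ hφV hδ hleb

theorem stmt1_general {X : Type*} [MetricSpace X] [CompactSpace X] {ε : ℝ} :
    sInf {c : ℝ≥0∞ | ∃ n : ℕ, c = n ∧ PolyWidimLE (fun x y : X => dist x y) ε n}
      = widim (fun x y : X => dist x y) ε := by
  refine congrArg sInf (Set.ext fun c => exists_congr fun n => and_congr_right fun _ => ?_)
  refine ⟨widimLE_of_polyWidimLE, fun h => ?_⟩
  obtain ⟨N, φ, hφ, hφV, hfib⟩ := exists_continuous_stdSkeleton_of_widimLE h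
  exact polyWidimLE_of_continuous_stdSkeleton hφ hφV hfib

/-- For a compact metric space `(X,d)` and `ε > 0`, `widim_ε(X,d)` (defined via
ε-embeddings into at most `n`-dimensional polyhedra) coincides with the minimum `n`
admitting a finite open cover of mesh `< ε` and order `≤ n`. -/
theorem stmt1 {X : Type*} [MetricSpace X] [CompactSpace X] {ε : ℝ} (hε : 0 < ε) :
    sInf {c : ℝ≥0∞ | ∃ n : ℕ, c = n ∧ PolyWidimLE (fun x y : X => dist x y) ε n}
      = widim (fun x y : X => dist x y) ε :=
  stmt1_general
end

section
/- Let (Z,S) be an aperiodic zero-dimensional topological dynamical system (Z compact metric, S a homeomorphism with no periodic points) and N a positive integer. Then there exists a clopen set B ⊆ Z such that B ∩ S^k B = ∅ for all 1 ≤ k ≤ N and Z = ⋃_{k=1}^{2N+1} S^k B. -/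
open scoped ENNReal NNReal
open Set Function Filter Topology

/-!
Aperiodicity, continuity and zero-dimensionality give every point a clopen neighbourhood `V`
disjoint from `S^k V` for `1 ≤ k ≤ N`; finitely many such `V` cover `Z`. Markers are chosen
greedily: each new `V` contributes only its part outside `S^j B` for `|j| ≤ N`, where `B` is the
marker built so far, so separation survives and at the end these `2N+1` translates of `B`
cover `Z`. Shifting by `N+1` turns the window `-N..N` into `1..2N+1`.
-/

section Iterates

variable {α : Type*} (f : α → α) (N : ℕ)

def IterDisjoint (A : Set α) : Prop :=
  ∀ k ∈ Finset.Icc 1 N, Disjoint A (f^[k] '' A)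

/-- The points `f^j a` with `a ∈ A` and `|j| ≤ N`, negative powers being read as preimages. -/
def iterNbhd (A : Set α) : Set α :=
  ⋃ k ∈ Finset.range (N + 1), (f^[k] '' A ∪ f^[k] ⁻¹' A)

variable {f N}

theorem subset_iterNbhd (A : Set α) : A ⊆ iterNbhd f N A := fun x hx =>
  mem_biUnion (Finset.mem_range.2 N.succ_pos) (Or.inl ⟨x, hx, rfl⟩)

theorem iterNbhd_mono {A B : Set α} (h : A ⊆ B) : iterNbhd f N A ⊆ iterNbhd f N B :=
  biUnion_mono subset_rfl fun _ _ => union_subset_union (image_mono h) (preimage_mono h)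

theorem IterDisjoint.union_diff_iterNbhd {B U : Set α} (hB : IterDisjoint f N B)
    (hU : IterDisjoint f N U) : IterDisjoint f N (B ∪ (U \ iterNbhd f N B)) := by
  intro k hk
  have hk' : k ∈ Finset.range (N + 1) := Finset.mem_range_succ_iff.2 (Finset.mem_Icc.1 hk).2
  rw [Set.disjoint_left]
  rintro _ (hx | ⟨hxU, hxB⟩) ⟨y, hy | ⟨hyU, hyB⟩, rfl⟩
  · exact Set.disjoint_left.1 (hB k hk) hx ⟨y, hy, rfl⟩
  · exact hyB (mem_biUnion hk' (Or.inr hx))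
  · exact hxB (mem_biUnion hk' (Or.inl ⟨y, hy, rfl⟩))
  · exact Set.disjoint_left.1 (hU k hk) hxU ⟨y, hyU, rfl⟩

theorem iUnion_iterate_image_eq_univ (hf : Surjective f) {B : Set α}
    (hB : iterNbhd f N B = univ) : ⋃ k ∈ Finset.Icc 1 (2 * N + 1), f^[k] '' B = univ := by
  refine eq_univ_of_forall fun x => ?_
  obtain ⟨w, rfl⟩ := hf.iterate (N + 1) x
  obtain ⟨k, hk, ⟨b, hb, rfl⟩ | hkw⟩ := mem_iUnion₂.1 (hB ▸ mem_univ w)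
  all_goals rw [Finset.mem_range] at hk
  · exact mem_biUnion (x := N + 1 + k) (Finset.mem_Icc.2 ⟨by omega, by omega⟩)
      ⟨b, hb, iterate_add_apply f (N + 1) k b⟩
  · refine mem_biUnion (x := N + 1 - k) (Finset.mem_Icc.2 ⟨by omega, by omega⟩) ⟨_, hkw, ?_⟩
    rw [← iterate_add_apply, Nat.sub_add_cancel hk.le]

end Iterates

section Homeomorph

variable {Z : Type*} [TopologicalSpace Z] (S : Z ≃ₜ Z) (N : ℕ)

theorem isClopen_image_iterate {A : Set Z} (hA : IsClopen A) (k : ℕ) :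
    IsClopen ((⇑S)^[k] '' A) := by
  rw [image_eq_preimage_of_inverse (LeftInverse.iterate S.symm_apply_apply k)
    (RightInverse.iterate S.apply_symm_apply k)]
  exact hA.preimage (S.symm.continuous.iterate k)

theorem IsClopen.iterNbhd {A : Set Z} (hA : IsClopen A) : IsClopen (iterNbhd S N A) :=
  isClopen_biUnion_finset fun k _ =>
    (isClopen_image_iterate S hA k).union (hA.preimage (S.continuous.iterate k))

theorem exists_isClopen_iterDisjoint_biUnion_subset {ι : Type*} (s : Finset ι) (U : ι → Set Z)
    (hU : ∀ i, IsClopen (U i)) (hUdisj : ∀ i, IterDisjoint S N (U i)) :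
    ∃ B, IsClopen B ∧ IterDisjoint S N B ∧ ⋃ i ∈ s, U i ⊆ iterNbhd S N B := by
  classical
  induction s using Finset.induction_on with
  | empty => exact ⟨∅, isClopen_empty, fun _ _ => disjoint_bot_left, by simp⟩
  | insert a s _ ih =>
    obtain ⟨B, hB, hBdisj, hcover⟩ := ih
    set B' := B ∪ (U a \ iterNbhd S N B)
    have hBB' : iterNbhd S N B ⊆ iterNbhd S N B' := iterNbhd_mono subset_union_left
    refine ⟨B', hB.union ((hU a).diff (hB.iterNbhd S N)),
      hBdisj.union_diff_iterNbhd (hUdisj a), ?_⟩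
    rw [Finset.set_biUnion_insert]
    refine union_subset (fun x hx => ?_) (hcover.trans hBB')
    by_cases hxB : x ∈ iterNbhd S N B
    · exact hBB' hxB
    · exact subset_iterNbhd B' (Or.inr ⟨hx, hxB⟩)

end Homeomorph

theorem exists_mem_nhds_disjoint_image {α : Type*} [TopologicalSpace α] [T2Space α] {f : α → α}
    (hf : Continuous f) {z : α} (hz : f z ≠ z) : ∃ W ∈ 𝓝 z, Disjoint W (f '' W) := by
  obtain ⟨u, v, hu, hv, hzu, hzv, huv⟩ := t2_separation hz
  refine ⟨v ∩ f ⁻¹' u, inter_mem (hv.mem_nhds hzv) (hf.continuousAt.preimage_mem_nhds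
    (hu.mem_nhds hzu)), huv.symm.mono inter_subset_left ?_⟩
  exact image_subset_iff.2 inter_subset_right

theorem exists_isClopen_iterDisjoint_mem {α : Type*} [TopologicalSpace α] [T2Space α]
    [CompactSpace α] [TotallyDisconnectedSpace α] {f : α → α} (hf : Continuous f) {N : ℕ}
    {z : α} (hz : ∀ k ∈ Finset.Icc 1 N, f^[k] z ≠ z) :
    ∃ V, IsClopen V ∧ z ∈ V ∧ IterDisjoint f N V := by
  choose! W hW hWdisj using fun k (hk : k ∈ Finset.Icc 1 N) =>
    exists_mem_nhds_disjoint_image (hf.iterate k) (hz k hk)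
  obtain ⟨V, ⟨hzV, hV⟩, hVW⟩ :=
    (nhds_basis_clopen z).mem_iff.1 ((biInter_finset_mem _).2 hW)
  refine ⟨V, hV, hzV, fun k hk => ?_⟩
  have hVWk : V ⊆ W k := hVW.trans (biInter_subset_of_mem hk)
  exact (hWdisj k hk).mono hVWk (image_mono hVWk)

theorem stmt2_general {Z : Type*} [MetricSpace Z] [CompactSpace Z] [TotallyDisconnectedSpace Z]
    (S : Z ≃ₜ Z) (hap : ∀ (z : Z) (n : ℕ), 0 < n → (⇑S)^[n] z ≠ z)
    (N : ℕ) :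
    ∃ B : Set Z, IsClopen B ∧
      (∀ k : ℕ, 1 ≤ k → k ≤ N → B ∩ (⇑S)^[k] '' B = ∅) ∧
      (⋃ k ∈ Finset.Icc 1 (2 * N + 1), (⇑S)^[k] '' B) = Set.univ := by
  choose V hV hzV hVdisj using fun z : Z =>
    exists_isClopen_iterDisjoint_mem S.continuous (N := N) (z := z)
      fun k hk => hap z k (Finset.mem_Icc.1 hk).1
  obtain ⟨t, ht⟩ := CompactSpace.elim_nhds_subcover V fun z => (hV z).isOpen.mem_nhds (hzV z)
  obtain ⟨B, hB, hBdisj, hcover⟩ := exists_isClopen_iterDisjoint_biUnion_subset S N t V hV hVdisj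
  refine ⟨B, hB, fun k hk1 hkN => (hBdisj k (Finset.mem_Icc.2 ⟨hk1, hkN⟩)).inter_eq, ?_⟩
  exact iUnion_iterate_image_eq_univ S.surjective (eq_univ_of_univ_subset (ht.ge.trans hcover))

/-- Marker property: for an aperiodic zero-dimensional system `(Z,S)` and `N ≥ 1`
there is a clopen `B ⊆ Z` with `B ∩ S^k B = ∅` for `1 ≤ k ≤ N` and
`Z = ⋃_{k=1}^{2N+1} S^k B`. (Zero-dimensionality of the compact metric space `Z`
is expressed as total disconnectedness.) -/
theorem stmt2 {Z : Type*} [MetricSpace Z] [CompactSpace Z] [TotallyDisconnectedSpace Z]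
    (S : Z ≃ₜ Z) (hap : ∀ (z : Z) (n : ℕ), 0 < n → (⇑S)^[n] z ≠ z)
    (N : ℕ) (hN : 0 < N) :
    ∃ B : Set Z, IsClopen B ∧
      (∀ k : ℕ, 1 ≤ k → k ≤ N → B ∩ (⇑S)^[k] '' B = ∅) ∧
      (⋃ k ∈ Finset.Icc 1 (2 * N + 1), (⇑S)^[k] '' B) = Set.univ :=
  stmt2_general S hap N
end

section
/- Let (Z,S) be an aperiodic zero-dimensional system and N ≥ 1. Suppose U_1,…,U_m are clopen sets covering Z with U_i ∩ S^k U_i = ∅ for all 1 ≤ i ≤ m and 1 ≤ k ≤ N. Define V_1 = U_1 and V_{l+1} = V_l ∪ (U_{l+1} \ ⋃_{i=-N}^{N} S^i V_l). Then for all 1 ≤ l ≤ m: V_l ∩ S^k V_l = ∅ for 1 ≤ k ≤ N, and U_1 ∪ ⋯ ∪ U_l ⊆ ⋃_{k=-N}^{N} S^k V_l. -/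
open scoped ENNReal NNReal
open Set Function Filter Topology

/-!
Induction on `l`. The new points `U_{l+1} \ ⋃_{|i| ≤ N} S^i V_l` are at orbit distance more than
`N` from `V_l`, so a coincidence `S^k y = x` with `1 ≤ k ≤ N` cannot join a new point to a point
of `V_l`; within `V_l` and within `U_{l+1}` it is excluded by hypothesis. The points of
`U_{l+1}` that are not added lie in `⋃_{|i| ≤ N} S^i V_l` already, so the cover survives.
-/

section Markers

variable {X : Type*} [TopologicalSpace X] (T : X ≃ₜ X) (N : ℕ)

lemma hIter_eq_zpow (n : ℤ) : hIter T n = ⇑(T.toEquiv ^ n) := by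
  funext x
  rcases Int.eq_nat_or_neg n with ⟨k, rfl | rfl⟩
  · simp only [hIter, Int.natCast_nonneg, if_true, Int.toNat_natCast, zpow_natCast]
    rfl
  · rcases k.eq_zero_or_pos with rfl | hk
    · simp [hIter]
    · have hneg : ¬ 0 ≤ -(k : ℤ) := by omega
      simp only [hIter, hneg, if_false, neg_neg, Int.toNat_natCast, zpow_neg, zpow_natCast,
        ← inv_pow]
      rfl

lemma hIter_natCast (k : ℕ) : hIter T k = (⇑T)^[k] := by
  rw [hIter_eq_zpow, zpow_natCast]
  rfl

lemma hIter_hIter_neg (n : ℤ) (x : X) : hIter T n (hIter T (-n) x) = x := by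
  rw [hIter_eq_zpow, hIter_eq_zpow, ← Equiv.Perm.mul_apply, ← zpow_add, add_neg_cancel,
    zpow_zero, Equiv.Perm.one_apply]

def orbitThickening (A : Set X) : Set X :=
  ⋃ k ∈ Finset.Icc (-(N : ℤ)) N, hIter T k '' A

def IterateDisjoint (A : Set X) : Prop :=
  ∀ k : ℕ, 1 ≤ k → k ≤ N → A ∩ (⇑T)^[k] '' A = ∅

variable {T N}

lemma mem_orbitThickening_of_hIter_neg_mem {A : Set X} {x : X} {i : ℤ} (hi : |i| ≤ N)
    (hx : hIter T (-i) x ∈ A) : x ∈ orbitThickening T N A :=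
  mem_iUnion₂.mpr ⟨i, Finset.mem_Icc.mpr (abs_le.mp hi), _, hx, hIter_hIter_neg T i x⟩

lemma subset_orbitThickening (A : Set X) : A ⊆ orbitThickening T N A := fun x hx =>
  mem_orbitThickening_of_hIter_neg_mem (i := 0) (by simp) (by simpa [hIter_eq_zpow] using hx)

lemma orbitThickening_mono {A B : Set X} (h : A ⊆ B) :
    orbitThickening T N A ⊆ orbitThickening T N B :=
  iUnion₂_mono fun _ _ => image_mono h

lemma iterateDisjoint_union_diff_orbitThickening {A B : Set X} (hA : IterateDisjoint T N A)
    (hB : IterateDisjoint T N B) : IterateDisjoint T N (A ∪ (B \ orbitThickening T N A)) := by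
  intro k hk1 hkN
  refine eq_empty_of_forall_notMem ?_
  rintro _ ⟨hx, y, hy, rfl⟩
  have hk : |(k : ℤ)| ≤ N := by rw [abs_of_nonneg (by omega)]; exact_mod_cast hkN
  rcases hx with hx | hx <;> rcases hy with hy | hy
  · exact (hA k hk1 hkN).subset ⟨hx, y, hy, rfl⟩
  · refine hy.2 (mem_orbitThickening_of_hIter_neg_mem (i := -k) (by simpa using hk) ?_)
    simpa [hIter_natCast] using hx
  · refine hx.2 (mem_orbitThickening_of_hIter_neg_mem hk ?_)
    have hy' := hIter_hIter_neg T (-k) y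
    rw [neg_neg] at hy'
    rwa [← hIter_natCast, hy']
  · exact (hB k hk1 hkN).subset ⟨hx.1, y, hy.1, rfl⟩

lemma orbitThickening_union_subset_orbitThickening_union_diff (A B : Set X) :
    orbitThickening T N A ∪ B ⊆ orbitThickening T N (A ∪ (B \ orbitThickening T N A)) := by
  rintro x (hx | hx)
  · exact orbitThickening_mono subset_union_left hx
  · by_cases hxA : x ∈ orbitThickening T N A
    · exact orbitThickening_mono subset_union_left hxA
    · exact subset_orbitThickening _ (Or.inr ⟨hx, hxA⟩)

end Markers

lemma Fin.biUnion_le_succ_subset {α : Type*} {m l : ℕ} (U : Fin m → Set α) (hl : l + 1 < m) :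
    (⋃ i : Fin m, ⋃ (_ : i ≤ ⟨l + 1, hl⟩), U i) ⊆
      (⋃ i : Fin m, ⋃ (_ : i ≤ ⟨l, by omega⟩), U i) ∪ U ⟨l + 1, hl⟩ := by
  simp only [iUnion_subset_iff]
  intro i hi x hx
  rcases (Fin.le_def.mp hi).lt_or_eq with hlt | heq
  · exact Or.inl (mem_iUnion₂.mpr ⟨i, Fin.le_def.mpr (by simp at hlt ⊢; omega), hx⟩)
  · exact Or.inr (Fin.ext heq ▸ hx)

theorem stmt4_general {Z : Type*} [MetricSpace Z]
    (S : Z ≃ₜ Z)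
    {N : ℕ} {m : ℕ} (hm : 0 < m)
    (U : Fin m → Set Z)
    (hUdisj : ∀ i, ∀ k : ℕ, 1 ≤ k → k ≤ N → U i ∩ (⇑S)^[k] '' U i = ∅)
    (V : Fin m → Set Z)
    (hV0 : V ⟨0, hm⟩ = U ⟨0, hm⟩)
    (hVrec : ∀ (l : ℕ) (h : l + 1 < m),
      V ⟨l + 1, h⟩ = V ⟨l, Nat.lt_of_succ_lt h⟩ ∪
        (U ⟨l + 1, h⟩ \
          ⋃ i ∈ Finset.Icc (-(N:ℤ)) (N:ℤ), hIter S i '' V ⟨l, Nat.lt_of_succ_lt h⟩)) :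
    ∀ l : Fin m,
      (∀ k : ℕ, 1 ≤ k → k ≤ N → V l ∩ (⇑S)^[k] '' V l = ∅) ∧
      (⋃ i : Fin m, ⋃ (_ : i ≤ l), U i) ⊆
        ⋃ k ∈ Finset.Icc (-(N:ℤ)) (N:ℤ), hIter S k '' V l := by
  change ∀ l, IterateDisjoint S N (V l) ∧ _ ⊆ orbitThickening S N (V l)
  rintro ⟨l, hl⟩
  induction l with
  | zero =>
    have hV : V ⟨0, hl⟩ = U ⟨0, hl⟩ := hV0
    refine ⟨hV ▸ hUdisj _, ?_⟩
    simp only [iUnion_subset_iff]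
    intro i hi
    rw [le_antisymm hi (Fin.mk_le_mk.mpr (Nat.zero_le _)), hV]
    exact subset_orbitThickening _
  | succ l ih =>
    obtain ⟨hdisj, hcov⟩ := ih (by omega)
    rw [hVrec l hl]
    exact ⟨iterateDisjoint_union_diff_orbitThickening hdisj (hUdisj _),
      (Fin.biUnion_le_succ_subset U hl).trans <| (union_subset_union_left _ hcov).trans <|
        orbitThickening_union_subset_orbitThickening_union_diff _ _⟩

/-- The inductive marker construction: given clopen sets `U_1,…,U_m` covering `Z` with
`U_i ∩ S^k U_i = ∅` for `1 ≤ k ≤ N`, the sets `V_1 = U_1`,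
`V_{l+1} = V_l ∪ (U_{l+1} \ ⋃_{i=-N}^{N} S^i V_l)` satisfy, for each `l`:
`V_l ∩ S^k V_l = ∅` for `1 ≤ k ≤ N`, and `U_1 ∪ ⋯ ∪ U_l ⊆ ⋃_{k=-N}^{N} S^k V_l`. -/
theorem stmt4 {Z : Type*} [MetricSpace Z] [CompactSpace Z] [TotallyDisconnectedSpace Z]
    (S : Z ≃ₜ Z) (hap : ∀ (z : Z) (n : ℕ), 0 < n → (⇑S)^[n] z ≠ z)
    {N : ℕ} (hN : 0 < N) {m : ℕ} (hm : 0 < m)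
    (U : Fin m → Set Z) (hUclop : ∀ i, IsClopen (U i)) (hUcov : (⋃ i, U i) = Set.univ)
    (hUdisj : ∀ i, ∀ k : ℕ, 1 ≤ k → k ≤ N → U i ∩ (⇑S)^[k] '' U i = ∅)
    (V : Fin m → Set Z)
    (hV0 : V ⟨0, hm⟩ = U ⟨0, hm⟩)
    (hVrec : ∀ (l : ℕ) (h : l + 1 < m),
      V ⟨l + 1, h⟩ = V ⟨l, Nat.lt_of_succ_lt h⟩ ∪
        (U ⟨l + 1, h⟩ \
          ⋃ i ∈ Finset.Icc (-(N:ℤ)) (N:ℤ), hIter S i '' V ⟨l, Nat.lt_of_succ_lt h⟩)) :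
    ∀ l : Fin m,
      (∀ k : ℕ, 1 ≤ k → k ≤ N → V l ∩ (⇑S)^[k] '' V l = ∅) ∧
      (⋃ i : Fin m, ⋃ (_ : i ≤ l), U i) ⊆
        ⋃ k ∈ Finset.Icc (-(N:ℤ)) (N:ℤ), hIter S k '' V l :=
  stmt4_general S hm U hUdisj V hV0 hVrec
end

section
/- Let N ≥ 1 and let u_1,…,u_N be points in [0,1]^M. Suppose that whenever J, K ⊆ {1,…,N} with |J|, |K| ≤ a+1 and there are nonzero reals (λ_i)_{i∈J}, (μ_i)_{i∈K} with Σλ_i = Σμ_i = 1 and Σ_{i∈J} λ_i u_i = Σ_{i∈K} μ_i u_i, then J = K and λ_i = μ_i for all i. Then for any partition of unity (φ_i)_{i=1}^N on a space X subordinate to an open cover of order ≤ a, the map g(x) = Σ φ_i(x) u_i satisfies: g(x) = g(y) implies there exists i with φ_i(x) = φ_i(y) > 0. -/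
open scoped ENNReal NNReal
open Set Function Filter Topology

/-- General position implies fiber condition: if points `u_1,…,u_N ∈ [0,1]^M` are in
general position (any two affine combinations, with nonzero coefficients, of at most
`a+1` of them agree only trivially), then for any partition of unity `(φ_i)`
subordinate to an open cover of order `≤ a`, the map `g(x) = Σ φ_i(x) u_i` satisfies:
`g(x) = g(y)` implies some `i` has `φ_i(x) = φ_i(y) > 0`. -/
theorem stmt14 {X : Type*} [TopologicalSpace X] {M N a : ℕ} (hN : 0 < N)
    (u : Fin N → Fin M → ℝ) (hu : ∀ i j, u i j ∈ Set.Icc (0:ℝ) 1)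
    (hgen : ∀ (J K : Finset (Fin N)) (lam mu : Fin N → ℝ),
      J.card ≤ a + 1 → K.card ≤ a + 1 →
      (∀ i ∈ J, lam i ≠ 0) → (∀ i ∈ K, mu i ≠ 0) →
      (∑ i ∈ J, lam i) = 1 → (∑ i ∈ K, mu i) = 1 →
      (∑ i ∈ J, lam i • u i) = (∑ i ∈ K, mu i • u i) →
      J = K ∧ ∀ i ∈ J, lam i = mu i)
    (U : Fin N → Set X) (hUopen : ∀ i, IsOpen (U i)) (hUcov : (⋃ i, U i) = Set.univ)
    (hord : ∀ x : X, ({i | x ∈ U i} : Set (Fin N)).ncard ≤ a + 1)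
    (φ : Fin N → X → ℝ) (hφc : ∀ i, Continuous (φ i)) (hφ0 : ∀ i x, 0 ≤ φ i x)
    (hsupp : ∀ i, tsupport (φ i) ⊆ U i) (hsum : ∀ x, ∑ i, φ i x = 1) :
    ∀ x y : X, (∑ i, φ i x • u i) = (∑ i, φ i y • u i) →
      ∃ i, φ i x = φ i y ∧ 0 < φ i x := by
  intro x y hg
  set J : Finset (Fin N) := Finset.univ.filter (fun i => φ i x ≠ 0) with hJ
  set K : Finset (Fin N) := Finset.univ.filter (fun i => φ i y ≠ 0) with hK
  have hcard : ∀ (z : X), (Finset.univ.filter (fun i => φ i z ≠ 0)).card ≤ a + 1 := by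
    intro z
    have hsub : (↑(Finset.univ.filter (fun i => φ i z ≠ 0)) : Set (Fin N)) ⊆ {i | z ∈ U i} := by
      intro i hi
      simp only [Finset.coe_filter, Set.mem_setOf_eq, Finset.mem_univ, true_and] at hi
      exact hsupp i (subset_tsupport _ hi)
    calc (Finset.univ.filter (fun i => φ i z ≠ 0)).card
        = (↑(Finset.univ.filter (fun i => φ i z ≠ 0)) : Set (Fin N)).ncard := by
          rw [Set.ncard_coe_finset]
      _ ≤ ({i | z ∈ U i} : Set (Fin N)).ncard :=
          Set.ncard_le_ncard hsub (Set.toFinite _)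
      _ ≤ a + 1 := hord z
  have hsumJ : ∀ (z : X), ∑ i ∈ Finset.univ.filter (fun i => φ i z ≠ 0), φ i z = 1 := by
    intro z
    rw [← hsum z]
    exact Finset.sum_filter_ne_zero _
  have hsumvJ : ∀ (z : X), ∑ i ∈ Finset.univ.filter (fun i => φ i z ≠ 0), φ i z • u i
      = ∑ i, φ i z • u i := by
    intro z
    refine Finset.sum_subset (Finset.subset_univ _) ?_
    intro i _ hi
    simp only [Finset.mem_filter, Finset.mem_univ, true_and, not_not] at hi
    rw [hi, zero_smul]
  have key := hgen J K (fun i => φ i x) (fun i => φ i y) (hcard x) (hcard y)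
    (fun i hi => (Finset.mem_filter.mp hi).2) (fun i hi => (Finset.mem_filter.mp hi).2)
    (hsumJ x) (hsumJ y) (by rw [hJ, hK, hsumvJ x, hsumvJ y]; exact hg)
  have hJne : J.Nonempty := by
    by_contra h
    rw [Finset.not_nonempty_iff_eq_empty] at h
    have := hsumJ x
    rw [← hJ, h, Finset.sum_empty] at this
    exact one_ne_zero this.symm
  obtain ⟨i, hi⟩ := hJne
  refine ⟨i, key.2 i hi, ?_⟩
  exact lt_of_le_of_ne (hφ0 i x) (Ne.symm (Finset.mem_filter.mp hi).2)
end
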